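/- arXiv:1504.03534 — 10 statements merged into one kernel-verified Lean document; each statement's English description precedes it below -/
import Mathlib

section
/- For every natural number k ≥ 1, the sum ∑_{i=0}^{k} (i+1)(i+2)/(i(i+2)+4) is at most 3/2 + k + log k, where log denotes the natural logarithm. -/
/-! Each summand with `i ≥ 1` is at most `1 + 1/i`, and the summand at `i = 0` is `1/2`; so the sum
is at most `1/2 + k + H_k`, and `H_k ≤ 1 + log k`. -/

lemma mul_div_mul_add_four_le_one_add_inv {x : ℝ} (hx : 0 < x) :
    (x + 1) * (x + 2) / (x * (x + 2) + 4) ≤ 1 + x⁻¹ := by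
  rw [div_le_iff₀ (by positivity)]
  have : x⁻¹ * x = 1 := inv_mul_cancel₀ hx.ne'
  nlinarith [inv_pos.mpr hx]

theorem stmt_2_general (k : ℕ) :
    ∑ i ∈ Finset.range (k+1),
        (((i : ℝ) + 1) * ((i : ℝ) + 2)) / ((i : ℝ) * ((i : ℝ) + 2) + 4)
      ≤ 3/2 + (k : ℝ) + Real.log k := by
  calc _ ≤ ∑ i ∈ Finset.range k, (1 + ((i + 1 : ℕ) : ℝ)⁻¹) + 1 / 2 := by
        rw [Finset.sum_range_succ']
        refine add_le_add (Finset.sum_le_sum fun i _ => ?_) (by norm_num)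
        exact mul_div_mul_add_four_le_one_add_inv (by positivity)
    _ = k + harmonic k + 1 / 2 := by simp [Finset.sum_add_distrib, harmonic]
    _ ≤ 3/2 + (k : ℝ) + Real.log k := by linarith [harmonic_le_one_add_log k]

theorem stmt_2 (k : ℕ) (hk : 1 ≤ k) :
    ∑ i ∈ Finset.range (k+1),
        (((i : ℝ) + 1) * ((i : ℝ) + 2)) / ((i : ℝ) * ((i : ℝ) + 2) + 4)
      ≤ 3/2 + (k : ℝ) + Real.log k :=
  stmt_2_general k
end

section
/- Let r ≥ 0 and define the real sequence S by S_0 = 1 and S_{k+1} = (1 + (2+r)S_k + sqrt((1+(2+r)S_k)² − 4S_k²))/2. Then for every k ≥ 0, S_k ≥ (k+1)(k+4)/4. -/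
theorem stmt_7 (r : ℝ) (hr : 0 ≤ r) (S : ℕ → ℝ) (hS0 : S 0 = 1)
    (hSrec : ∀ k : ℕ, S (k+1) =
      (1 + (2 + r) * S k + Real.sqrt ((1 + (2 + r) * S k) ^ 2 - 4 * (S k) ^ 2)) / 2) :
    ∀ k : ℕ, S k ≥ ((k : ℝ) + 1) * ((k : ℝ) + 4) / 4 := by
  intro k
  induction k with
  | zero => simp [hS0]
  | succ k ih =>
    have hk : (0:ℝ) ≤ (k:ℝ) := Nat.cast_nonneg k
    have hSk1 : (1:ℝ) ≤ S k := by nlinarith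
    have hsq : Real.sqrt ((1 + (2 + r) * S k) ^ 2 - 4 * (S k) ^ 2) ≥ (k:ℝ) + 2 := by
      rw [ge_iff_le, show ((k:ℝ) + 2) = Real.sqrt (((k:ℝ)+2)^2) from
        (Real.sqrt_sq (by positivity)).symm]
      apply Real.sqrt_le_sqrt
      nlinarith [mul_nonneg hr (sq_nonneg (S k)), mul_nonneg (mul_nonneg hr hr) (sq_nonneg (S k)), mul_nonneg hr (by linarith : (0:ℝ) ≤ S k)]
    rw [hSrec k]
    push_cast
    nlinarith
end

section
/- Let r ≥ 0 and define the real sequence S by S_0 = 1 and S_{k+1} = (1 + (2+r)S_k + sqrt((1+(2+r)S_k)² − 4S_k²))/2. Then for every k ≥ 0, S_k ≥ ((2 + r + sqrt(r² + 4r))/2)^k. -/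
theorem stmt_8 (r : ℝ) (hr : 0 ≤ r) (S : ℕ → ℝ) (hS0 : S 0 = 1)
    (hSrec : ∀ k : ℕ, S (k+1) =
      (1 + (2 + r) * S k + Real.sqrt ((1 + (2 + r) * S k) ^ 2 - 4 * (S k) ^ 2)) / 2) :
    ∀ k : ℕ, S k ≥ ((2 + r + Real.sqrt (r ^ 2 + 4 * r)) / 2) ^ k := by
  set q : ℝ := (2 + r + Real.sqrt (r ^ 2 + 4 * r)) / 2 with hq
  have hs : 0 ≤ Real.sqrt (r ^ 2 + 4 * r) := Real.sqrt_nonneg _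
  have hq1 : 1 ≤ q := by rw [hq]; linarith
  intro k
  induction k with
  | zero => simp [hS0]
  | succ k ih =>
    have hqk : (1:ℝ) ≤ q ^ k := one_le_pow₀ hq1
    have hSpos : (0:ℝ) ≤ S k := by linarith
    have key : S k * Real.sqrt (r ^ 2 + 4 * r) ≤
        Real.sqrt ((1 + (2 + r) * S k) ^ 2 - 4 * (S k) ^ 2) := by
      have h1 : S k * Real.sqrt (r ^ 2 + 4 * r) =
          Real.sqrt ((r ^ 2 + 4 * r) * (S k) ^ 2) := by
        rw [Real.sqrt_mul (by positivity), Real.sqrt_sq hSpos]; ring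
      rw [h1]
      apply Real.sqrt_le_sqrt
      nlinarith
    have step : q * S k ≤ S (k + 1) := by
      rw [hSrec k, hq]
      nlinarith
    calc q ^ (k + 1) = q * q ^ k := by ring
      _ ≤ q * S k := by
          apply mul_le_mul_of_nonneg_left ih (by linarith)
      _ ≤ S (k + 1) := step
end

section
/- Let r ≥ 0 and define S by S_0 = 1 and S_{k+1} = (1 + (2+r)S_k + sqrt((1+(2+r)S_k)² − 4S_k²))/2. Then for every k ≥ 0, S_{k+1}/S_k ≥ (2 + r + sqrt(r² + 4r))/2. -/
theorem stmt_9 (r : ℝ) (hr : 0 ≤ r) (S : ℕ → ℝ) (hS0 : S 0 = 1)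
    (hSrec : ∀ k : ℕ, S (k+1) =
      (1 + (2 + r) * S k + Real.sqrt ((1 + (2 + r) * S k) ^ 2 - 4 * (S k) ^ 2)) / 2) :
    ∀ k : ℕ, S (k+1) / S k ≥ (2 + r + Real.sqrt (r ^ 2 + 4 * r)) / 2 := by
  have hpos : ∀ k, 0 < S k := by
    intro k
    induction k with
    | zero => rw [hS0]; norm_num
    | succ n ih =>
      rw [hSrec n]
      have hsq : 0 ≤ Real.sqrt ((1 + (2 + r) * S n) ^ 2 - 4 * (S n) ^ 2) :=
        Real.sqrt_nonneg _
      nlinarith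
  intro k
  have hS := hpos k
  rw [ge_iff_le, le_div_iff₀ hS]
  have key : Real.sqrt (r ^ 2 + 4 * r) * S k ≤
      Real.sqrt ((1 + (2 + r) * S k) ^ 2 - 4 * (S k) ^ 2) := by
    have h1 : Real.sqrt (r ^ 2 + 4 * r) * S k = Real.sqrt ((r ^ 2 + 4 * r) * (S k) ^ 2) := by
      rw [Real.sqrt_mul (by nlinarith), Real.sqrt_sq hS.le]
    rw [h1]
    apply Real.sqrt_le_sqrt
    nlinarith
  rw [hSrec k]
  nlinarith
end

section
/- For every real r ≥ 0, one has (1 + (1/2)·sqrt(r))² ≤ (2 + r + sqrt(r² + 4r))/2, and for r > 0 additionally (2 + r + sqrt(r² + 4r))/2 ≤ (1 − sqrt(r/(r+1)))^{-1}. -/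
theorem stmt_10 (r : ℝ) (hr : 0 ≤ r) :
    (1 + (1/2) * Real.sqrt r) ^ 2 ≤ (2 + r + Real.sqrt (r ^ 2 + 4 * r)) / 2 ∧
    (0 < r → (2 + r + Real.sqrt (r ^ 2 + 4 * r)) / 2 ≤ (1 - Real.sqrt (r / (r + 1)))⁻¹) := by
  set s := Real.sqrt r with hs_def
  set t := Real.sqrt (r ^ 2 + 4 * r) with ht_def
  have hs : 0 ≤ s := Real.sqrt_nonneg r
  have hs2 : s ^ 2 = r := Real.sq_sqrt hr
  have ht : 0 ≤ t := Real.sqrt_nonneg _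
  have ht2 : t ^ 2 = r ^ 2 + 4 * r := Real.sq_sqrt (by nlinarith)
  have hts : 2 * s ≤ t := by
    have h4 : Real.sqrt (4 * r) ≤ t := Real.sqrt_le_sqrt (by nlinarith)
    have : Real.sqrt (4 * r) = 2 * s := by
      rw [show (4 : ℝ) * r = 2 ^ 2 * r by ring, Real.sqrt_mul (by positivity),
        Real.sqrt_sq (by norm_num)]
    linarith [this ▸ h4]
  constructor
  · nlinarith
  · intro hrpos
    set v := Real.sqrt (r / (r + 1)) with hv_def
    have hr1 : (0:ℝ) < r + 1 := by linarith
    have hv : 0 ≤ v := Real.sqrt_nonneg _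
    have hv2 : v ^ 2 * (r + 1) = r := by
      have := Real.sq_sqrt (show (0:ℝ) ≤ r / (r + 1) by positivity)
      rw [← hv_def] at this
      field_simp at this ⊢
      linarith
    have hv1 : v < 1 := by
      by_contra h
      push_neg at h
      have hvsq : 1 ≤ v ^ 2 := by nlinarith
      nlinarith [mul_le_mul_of_nonneg_right hvsq hr1.le]
    have hw : Real.sqrt (r ^ 2 + r) = (r + 1) * v := by
      rw [show r ^ 2 + r = ((r + 1) * v) ^ 2 by nlinarith,
        Real.sqrt_sq (by positivity)]
    have htw : t ≤ r + 2 * ((r + 1) * v) := by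
      rw [← hw]
      have h1 : Real.sqrt (r ^ 2 + 4 * r) ≤ Real.sqrt ((r + 2 * Real.sqrt (r ^ 2 + r)) ^ 2) := by
        apply Real.sqrt_le_sqrt
        have hw2 : Real.sqrt (r ^ 2 + r) ^ 2 = r ^ 2 + r := Real.sq_sqrt (by nlinarith)
        nlinarith [Real.sqrt_nonneg (r ^ 2 + r)]
      rw [Real.sqrt_sq (by positivity)] at h1
      exact h1
    have hpos : 0 < 1 - v := by linarith
    rw [inv_eq_one_div, le_div_iff₀ hpos]
    nlinarith [mul_nonneg (mul_nonneg hr hv) (sub_nonneg.mpr hv1.le), mul_pos hrpos (sub_pos.mpr hv1)]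
end

section
/- Let r > 0 and define S by S_0 = 1 and S_{k+1} = (1 + (2+r)S_k + sqrt((1+(2+r)S_k)² − 4S_k²))/2. Then for every k ≥ 0, (∑_{i=0}^{k} S_i)/S_k ≤ (1 + sqrt(1 + 4/r))/2 ≤ 1 + sqrt(1/r). -/
/-!
Let `c = (1 + √(1 + 4/r))/2`, the positive root of `r c (c - 1) = 1`. For `x ≥ 0` the discriminant
satisfies `(1 + (2+r)x)² - 4x² ≥ (r² + 4r)x² = (r c' x)²` with `c' = √(1 + 4/r)`, whence
`S_{k+1} ≥ (1 + r c) S_k`. As `(c - 1)(1 + r c) = c`, this reads `c S_k ≤ (c - 1) S_{k+1}`, which is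
exactly what propagates `∑_{i ≤ k} S_i ≤ c S_k` from `k` to `k + 1`.
-/

open Real Finset

theorem sum_range_succ_le_mul_of_mul_le (c : ℝ) (S : ℕ → ℝ) (hc : 1 ≤ c) (h0 : 0 ≤ S 0)
    (h : ∀ k, c * S k ≤ (c - 1) * S (k + 1)) (k : ℕ) :
    ∑ i ∈ range (k + 1), S i ≤ c * S k := by
  induction k with
  | zero => simp only [zero_add, range_one, sum_singleton]; nlinarith
  | succ k ih => rw [sum_range_succ]; linarith [h k]

/-- The largest root `y` of `(y - x)² = y (1 + r x)`. -/
noncomputable def nextTerm (r x : ℝ) : ℝ :=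
  (1 + (2 + r) * x + √((1 + (2 + r) * x) ^ 2 - 4 * x ^ 2)) / 2

noncomputable def ratioBound (r : ℝ) : ℝ := (1 + √(1 + 4 / r)) / 2

section

variable {r : ℝ}

theorem one_le_ratioBound (hr : 0 ≤ r) : 1 ≤ ratioBound r := by
  have : 1 ≤ √(1 + 4 / r) := by rw [one_le_sqrt]; linarith [div_nonneg zero_le_four hr]
  unfold ratioBound; linarith

theorem ratioBound_mul_ratioBound_sub_one (hr : 0 < r) :
    r * (ratioBound r * (ratioBound r - 1)) = 1 := by
  have hs : √(1 + 4 / r) ^ 2 = 1 + 4 / r := sq_sqrt (by positivity)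
  have : r * (4 / r) = 4 := by field_simp
  unfold ratioBound
  linear_combination r / 4 * hs + this / 4

theorem ratioBound_le_one_add_sqrt_inv (hr : 0 ≤ r) : ratioBound r ≤ 1 + √(1 / r) := by
  have hq : √(1 / r) ^ 2 = 1 / r := sq_sqrt (by positivity)
  have : √(1 + 4 / r) ≤ 1 + 2 * √(1 / r) := by
    rw [sqrt_le_iff]
    refine ⟨by positivity, ?_⟩
    have : 4 / r = 4 * (1 / r) := by ring
    nlinarith [sqrt_nonneg (1 / r)]
  unfold ratioBound; linarith

theorem mul_le_nextTerm (hr : 0 ≤ r) {x : ℝ} (hx : 0 ≤ x) :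
    (1 + r * ratioBound r) * x ≤ nextTerm r x := by
  have hs : √(1 + 4 / r) ^ 2 = 1 + 4 / r := sq_sqrt (by positivity)
  have hroot : r * √(1 + 4 / r) * x ≤ √((1 + (2 + r) * x) ^ 2 - 4 * x ^ 2) := by
    apply le_sqrt_of_sq_le
    have : r ^ 2 * (4 / r) = 4 * r := by
      rcases hr.eq_or_lt with rfl | hr; · simp
      field_simp
    calc (r * √(1 + 4 / r) * x) ^ 2 = (r ^ 2 + 4 * r) * x ^ 2 := by
          rw [mul_pow, mul_pow, hs, ← this]; ring
      _ ≤ (1 + (2 + r) * x) ^ 2 - 4 * x ^ 2 := by nlinarith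
  unfold nextTerm ratioBound; nlinarith

theorem nextTerm_nonneg (hr : 0 ≤ r) {x : ℝ} (hx : 0 ≤ x) : 0 ≤ nextTerm r x :=
  (mul_nonneg (by nlinarith [one_le_ratioBound hr]) hx).trans (mul_le_nextTerm hr hx)

theorem ratioBound_mul_le_mul_nextTerm (hr : 0 < r) {x : ℝ} (hx : 0 ≤ x) :
    ratioBound r * x ≤ (ratioBound r - 1) * nextTerm r x := by
  have hfac : (ratioBound r - 1) * (1 + r * ratioBound r) = ratioBound r := by
    linear_combination ratioBound_mul_ratioBound_sub_one hr
  calc ratioBound r * x = (ratioBound r - 1) * ((1 + r * ratioBound r) * x) := by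
        rw [← mul_assoc, hfac]
    _ ≤ (ratioBound r - 1) * nextTerm r x :=
        mul_le_mul_of_nonneg_left (mul_le_nextTerm hr.le hx)
          (by linarith [one_le_ratioBound hr.le])

end

theorem stmt_11 (r : ℝ) (hr : 0 < r) (S : ℕ → ℝ) (hS0 : S 0 = 1)
    (hSrec : ∀ k : ℕ, S (k+1) =
      (1 + (2 + r) * S k + Real.sqrt ((1 + (2 + r) * S k) ^ 2 - 4 * (S k) ^ 2)) / 2) :
    ∀ k : ℕ,
      (∑ i ∈ Finset.range (k+1), S i) / S k ≤ (1 + Real.sqrt (1 + 4 / r)) / 2 ∧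
      (1 + Real.sqrt (1 + 4 / r)) / 2 ≤ 1 + Real.sqrt (1 / r) := by
  have hS k : S (k + 1) = nextTerm r (S k) := hSrec k
  have hnonneg k : 0 ≤ S k := by
    induction k with
    | zero => simp [hS0]
    | succ k ih => exact hS k ▸ nextTerm_nonneg hr.le ih
  have hratio k : ratioBound r * S k ≤ (ratioBound r - 1) * S (k + 1) :=
    hS k ▸ ratioBound_mul_le_mul_nextTerm hr (hnonneg k)
  have hc := one_le_ratioBound hr.le
  intro k
  exact ⟨div_le_of_le_mul₀ (hnonneg k) (zero_le_one.trans hc)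
      (sum_range_succ_le_mul_of_mul_le _ S hc (hnonneg 0) hratio k),
    ratioBound_le_one_add_sqrt_inv hr.le⟩
end

section
/- Let r ≥ 0. Define S by S_0 = 1, S_{k+1} = (1 + (2+r)S_k + sqrt((1+(2+r)S_k)² − 4S_k²))/2, and T by T_0 = 1, T_{k+1} = (1 + 2T_k + sqrt(1 + 4T_k))/2. Then for every k ≥ 0, (∑_{i=0}^{k} S_i)/S_k ≤ (∑_{i=0}^{k} T_i)/T_k. -/
/-!
Both recursions are `x ↦ x * largeRoot (x⁻¹ + c)` with `c = 2 + r` for `S` and `c = 2` for `T`,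
where `largeRoot u`, the larger root of `t ^ 2 - u * t + 1`, is increasing and at least `1` for
`u ≥ 2`. Writing the normalized partial
sums as `R (k + 1) = R k * (S k / S (k + 1)) + 1`, it suffices to show
`S k / S (k + 1) ≤ T k / T (k + 1)`, i.e. `(T k)⁻¹ + 2 ≤ (S k)⁻¹ + 2 + r`. This invariant
propagates because the `T`-recursion is increasing and `largeRoot ≥ 1` absorbs the shift by `r`.
-/

open Finset

noncomputable def largeRoot (u : ℝ) : ℝ := (u + √(u ^ 2 - 4)) / 2

noncomputable def recursionStep (c x : ℝ) : ℝ :=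
  (1 + c * x + √((1 + c * x) ^ 2 - 4 * x ^ 2)) / 2

theorem one_le_largeRoot {u : ℝ} (hu : 2 ≤ u) : 1 ≤ largeRoot u := by
  unfold largeRoot
  linarith [Real.sqrt_nonneg (u ^ 2 - 4)]

theorem largeRoot_monotoneOn : MonotoneOn largeRoot (Set.Ici 2) := by
  intro u (hu : 2 ≤ u) v _ huv
  unfold largeRoot
  gcongr

theorem recursionStep_eq_mul_largeRoot (c : ℝ) {x : ℝ} (hx : 0 < x) :
    recursionStep c x = x * largeRoot (x⁻¹ + c) := by
  have hdisc : (1 + c * x) ^ 2 - 4 * x ^ 2 = x ^ 2 * ((x⁻¹ + c) ^ 2 - 4) := by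
    field_simp
  rw [recursionStep, largeRoot, hdisc, Real.sqrt_mul (sq_nonneg x), Real.sqrt_sq hx.le]
  field_simp

theorem recursionStep_pos {c x : ℝ} (hc : 0 ≤ c) (hx : 0 < x) : 0 < recursionStep c x := by
  unfold recursionStep
  positivity

theorem div_recursionStep (c : ℝ) {x : ℝ} (hx : 0 < x) :
    x / recursionStep c x = (largeRoot (x⁻¹ + c))⁻¹ := by
  rw [recursionStep_eq_mul_largeRoot c hx, div_mul_cancel_left₀ hx.ne']

theorem recursionStep_two_monotoneOn : MonotoneOn (recursionStep 2) (Set.Ici 0) := by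
  intro x _ y _ hxy
  have hdisc : ∀ t : ℝ, (1 + 2 * t) ^ 2 - 4 * t ^ 2 = 1 + 4 * t := fun t => by ring
  simp only [recursionStep, hdisc]
  gcongr

theorem inv_recursionStep_two_le {r x y : ℝ} (hr : 0 ≤ r) (hx : 0 < x) (hy : 0 < y)
    (hyx : y⁻¹ ≤ x⁻¹ + r) :
    (recursionStep 2 y)⁻¹ ≤ (recursionStep (2 + r) x)⁻¹ + r := by
  set a := x⁻¹
  have ha : 0 < a := inv_pos.mpr hx
  have hL : 1 ≤ largeRoot (a + (2 + r)) := one_le_largeRoot (by linarith)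
  have hmono : recursionStep 2 (a + r)⁻¹ ≤ recursionStep 2 y :=
    recursionStep_two_monotoneOn (by positivity : (0 : ℝ) ≤ (a + r)⁻¹) hy.le
      (inv_le_of_inv_le₀ hy hyx)
  calc (recursionStep 2 y)⁻¹
      ≤ (recursionStep 2 (a + r)⁻¹)⁻¹ :=
        inv_anti₀ (recursionStep_pos zero_le_two (by positivity)) hmono
    _ = a / largeRoot (a + (2 + r)) + r / largeRoot (a + (2 + r)) := by
      rw [recursionStep_eq_mul_largeRoot 2 (by positivity), mul_inv, inv_inv,
        add_assoc, add_comm r 2]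
      ring
    _ ≤ a / largeRoot (a + (2 + r)) + r := by gcongr; exact div_le_self hr hL
    _ = (recursionStep (2 + r) x)⁻¹ + r := by
      rw [recursionStep_eq_mul_largeRoot _ hx, mul_inv, div_eq_mul_inv]

theorem div_recursionStep_le {r x y : ℝ} (hx : 0 < x) (hy : 0 < y) (hyx : y⁻¹ ≤ x⁻¹ + r) :
    x / recursionStep (2 + r) x ≤ y / recursionStep 2 y := by
  rw [div_recursionStep _ hx, div_recursionStep _ hy]
  have hy2 : (2 : ℝ) ≤ y⁻¹ + 2 := by linarith [inv_pos.mpr hy]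
  have hyx2 : y⁻¹ + 2 ≤ x⁻¹ + (2 + r) := by linarith
  exact inv_anti₀ (by linarith [one_le_largeRoot hy2])
    (largeRoot_monotoneOn hy2 (hy2.trans hyx2) hyx2)

theorem sum_range_succ_div_eq {f : ℕ → ℝ} {k : ℕ} (hk : f k ≠ 0) (hk' : f (k + 1) ≠ 0) :
    (∑ i ∈ range (k + 2), f i) / f (k + 1)
      = (∑ i ∈ range (k + 1), f i) / f k * (f k / f (k + 1)) + 1 := by
  rw [sum_range_succ _ (k + 1)]
  field_simp

theorem sum_range_div_le_of_div_succ_le {S T : ℕ → ℝ}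
    (hS : ∀ k, 0 < S k) (hT : ∀ k, 0 < T k)
    (h : ∀ k, S k / S (k + 1) ≤ T k / T (k + 1)) (k : ℕ) :
    (∑ i ∈ range (k + 1), S i) / S k ≤ (∑ i ∈ range (k + 1), T i) / T k := by
  induction k with
  | zero => simp [(hS 0).ne', (hT 0).ne']
  | succ k ih =>
    have hRT : 0 ≤ (∑ i ∈ range (k + 1), T i) / T k :=
      div_nonneg (sum_nonneg fun i _ => (hT i).le) (hT k).le
    have hqS : 0 ≤ S k / S (k + 1) := div_nonneg (hS k).le (hS (k + 1)).le
    rw [sum_range_succ_div_eq (hS k).ne' (hS (k + 1)).ne',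
      sum_range_succ_div_eq (hT k).ne' (hT (k + 1)).ne']
    exact add_le_add_left (mul_le_mul ih (h k) hqS hRT) 1

theorem stmt_12 (r : ℝ) (hr : 0 ≤ r) (S T : ℕ → ℝ) (hS0 : S 0 = 1)
    (hSrec : ∀ k : ℕ, S (k+1) =
      (1 + (2 + r) * S k + Real.sqrt ((1 + (2 + r) * S k) ^ 2 - 4 * (S k) ^ 2)) / 2)
    (hT0 : T 0 = 1)
    (hTrec : ∀ k : ℕ, T (k+1) = (1 + 2 * T k + Real.sqrt (1 + 4 * T k)) / 2) :
    ∀ k : ℕ,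
      (∑ i ∈ Finset.range (k+1), S i) / S k ≤ (∑ i ∈ Finset.range (k+1), T i) / T k := by
  have hS : ∀ k, S (k + 1) = recursionStep (2 + r) (S k) := hSrec
  have hT : ∀ k, T (k + 1) = recursionStep 2 (T k) := fun k => by
    rw [hTrec, recursionStep]; ring_nf
  have hSpos : ∀ k, 0 < S k := fun k => by
    induction k with
    | zero => simp [hS0]
    | succ k ih => exact hS k ▸ recursionStep_pos (by linarith) ih
  have hTpos : ∀ k, 0 < T k := fun k => by
    induction k with
    | zero => simp [hT0]
    | succ k ih => exact hT k ▸ recursionStep_pos zero_le_two ih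
  have hinv : ∀ k, (T k)⁻¹ ≤ (S k)⁻¹ + r := fun k => by
    induction k with
    | zero => simp [hS0, hT0, hr]
    | succ k ih => rw [hS, hT]; exact inv_recursionStep_two_le hr (hSpos k) (hTpos k) ih
  refine sum_range_div_le_of_div_succ_le hSpos hTpos fun k => ?_
  rw [hS, hT]
  exact div_recursionStep_le (hSpos k) (hTpos k) (hinv k)
end

section
/- Define T by T_0 = 1 and T_{k+1} = (1 + 2T_k + sqrt(1 + 4T_k))/2. Then for every k ≥ 0, (∑_{i=0}^{k} T_i)/T_k ≤ k/3 + log(k+2)/6 + 1. -/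
/-!
Write `s k = √(T k)`. The recursion says `s (k+1) = (1 + √(1 + 4 s k ^ 2)) / 2`, i.e.
`s (k+1)` is the positive root of `x ^ 2 - x = T k`, so `T (k+1) = T k + s (k+1)`. Since
`2 s ≤ √(1 + 4 s ^ 2) ≤ 2 s + 1 / (4 s)`, each step adds to `s` between `1/2` and
`1/2 + 1/(4(k+2))`, whence `(k+2)/2 ≤ s k ≤ 1 + k/2 + log (k+1) / 4`.
With `c k = k/3 + log (k+2) / 6 + 1`, the bound `∑ T ≤ c k * T k` then follows by induction:
writing `d = s (k+1)` and `T k = d ^ 2 - d`, the step reduces to `(c k + 1 - c (k+1)) d ≤ c k`,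
where `c k + 1 - c (k+1) = 2/3 - (log (k+3) - log (k+2)) / 6` and the two bounds on `d` apply.
-/

open Real Finset

lemma one_div_add_one_le_log_sub_log {x : ℝ} (hx : 0 < x) :
    1 / (x + 1) ≤ log (x + 1) - log x := by
  have h := one_sub_inv_le_log_of_pos (x := (x + 1) / x) (by positivity)
  rw [log_div (by positivity) hx.ne', inv_div] at h
  calc 1 / (x + 1) = 1 - x / (x + 1) := by field_simp; ring
    _ ≤ _ := h

lemma two_mul_le_sqrt_one_add_four_mul_sq {s : ℝ} (hs : 0 ≤ s) : 2 * s ≤ √(1 + 4 * s ^ 2) :=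
  (le_sqrt (by positivity) (by positivity)).2 (by nlinarith)

lemma sqrt_one_add_four_mul_sq_le {s : ℝ} (hs : 0 < s) :
    √(1 + 4 * s ^ 2) ≤ 2 * s + 1 / (4 * s) := by
  rw [sqrt_le_left (by positivity)]
  have h : (2 * s + 1 / (4 * s)) ^ 2 = 1 + 4 * s ^ 2 + 1 / (16 * s ^ 2) := by field_simp; ring
  rw [h]
  linarith [show 0 < 1 / (16 * s ^ 2) by positivity]

lemma sqrt_half_one_add_two_mul_add_sqrt {t : ℝ} (ht : 0 ≤ t) :
    √((1 + 2 * t + √(1 + 4 * t)) / 2) = (1 + √(1 + 4 * t)) / 2 := by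
  have hsq : √(1 + 4 * t) ^ 2 = 1 + 4 * t := sq_sqrt (by linarith)
  rw [sqrt_eq_iff_mul_self_eq (by positivity) (by positivity)]
  linear_combination (-1 / 4 : ℝ) * hsq

noncomputable def sumRatioBound (k : ℕ) : ℝ := (k : ℝ) / 3 + log ((k : ℝ) + 2) / 6 + 1

namespace SqrtRec

variable {T : ℕ → ℝ}

lemma sqrt_succ_eq (hTrec : ∀ k : ℕ, T (k+1) = (1 + 2 * T k + √(1 + 4 * T k)) / 2)
    {k : ℕ} (hk : 0 ≤ T k) : √(T (k+1)) = (1 + √(1 + 4 * T k)) / 2 := by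
  rw [hTrec, sqrt_half_one_add_two_mul_add_sqrt hk]

lemma succ_eq_add_sqrt_succ (hTrec : ∀ k : ℕ, T (k+1) = (1 + 2 * T k + √(1 + 4 * T k)) / 2)
    {k : ℕ} (hk : 0 ≤ T k) : T (k+1) = T k + √(T (k+1)) := by
  rw [sqrt_succ_eq hTrec hk, hTrec]
  ring

lemma half_add_one_le_sqrt (hT0 : T 0 = 1)
    (hTrec : ∀ k : ℕ, T (k+1) = (1 + 2 * T k + √(1 + 4 * T k)) / 2) (k : ℕ) :
    ((k : ℝ) + 2) / 2 ≤ √(T k) := by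
  induction k with
  | zero => simp [hT0]
  | succ k ih =>
    have hk : 0 < T k := sqrt_pos.1 (lt_of_lt_of_le (by positivity) ih)
    have hstep := two_mul_le_sqrt_one_add_four_mul_sq (sqrt_nonneg (T k))
    rw [sq_sqrt hk.le] at hstep
    rw [sqrt_succ_eq hTrec hk.le]
    push_cast
    linarith

lemma pos (hT0 : T 0 = 1)
    (hTrec : ∀ k : ℕ, T (k+1) = (1 + 2 * T k + √(1 + 4 * T k)) / 2) (k : ℕ) : 0 < T k :=
  sqrt_pos.1 (lt_of_lt_of_le (by positivity) (half_add_one_le_sqrt hT0 hTrec k))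

lemma sqrt_le_half_add_log (hT0 : T 0 = 1)
    (hTrec : ∀ k : ℕ, T (k+1) = (1 + 2 * T k + √(1 + 4 * T k)) / 2) (k : ℕ) :
    √(T k) ≤ 1 + (k : ℝ) / 2 + log ((k : ℝ) + 1) / 4 := by
  induction k with
  | zero => simp [hT0]
  | succ k ih =>
    have hk := pos hT0 hTrec k
    have hs : 0 < √(T k) := sqrt_pos.2 hk
    have hinv : 1 / (4 * √(T k)) ≤ 1 / ((k : ℝ) + 1 + 1) / 2 := by
      rw [div_div]
      have hlow := half_add_one_le_sqrt hT0 hTrec k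
      exact one_div_le_one_div_of_le (by positivity) (by linarith)
    have hlog := one_div_add_one_le_log_sub_log (x := (k : ℝ) + 1) (by positivity)
    have hstep := sqrt_one_add_four_mul_sq_le hs
    rw [sq_sqrt hk.le] at hstep
    rw [sqrt_succ_eq hTrec hk.le]
    push_cast
    linarith

lemma bound_sub_mul_sqrt_succ_le (hT0 : T 0 = 1)
    (hTrec : ∀ k : ℕ, T (k+1) = (1 + 2 * T k + √(1 + 4 * T k)) / 2) (k : ℕ) :
    (sumRatioBound k + 1 - sumRatioBound (k + 1)) * √(T (k + 1)) ≤ sumRatioBound k := by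
  set d := √(T (k + 1))
  set Δ := log ((k : ℝ) + 2 + 1) - log ((k : ℝ) + 2)
  have hlow : ((k : ℝ) + 2 + 1) / 2 ≤ d := by
    have h := half_add_one_le_sqrt hT0 hTrec (k + 1)
    push_cast at h
    linarith
  have hupp : d ≤ 1 + ((k : ℝ) + 1) / 2 + log ((k : ℝ) + 2) / 4 := by
    have h := sqrt_le_half_add_log hT0 hTrec (k + 1)
    push_cast at h
    rwa [show (k : ℝ) + 1 + 1 = k + 2 by ring] at h
  have hΔ : 1 / ((k : ℝ) + 2 + 1) ≤ Δ := one_div_add_one_le_log_sub_log (by positivity)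
  have hΔd : 1 / 2 ≤ Δ * d := calc
    1 / 2 = 1 / ((k : ℝ) + 2 + 1) * (((k : ℝ) + 2 + 1) / 2) := by field_simp
    _ ≤ Δ * d := mul_le_mul hΔ hlow (by positivity) (le_trans (by positivity) hΔ)
  have hbound : sumRatioBound k + 1 - sumRatioBound (k + 1) = 2 / 3 - Δ / 6 := by
    simp only [sumRatioBound, Δ]
    push_cast
    rw [show (k : ℝ) + 1 + 2 = k + 2 + 1 by ring]
    ring
  rw [hbound, sumRatioBound]
  linear_combination (2 / 3 : ℝ) * hupp + (1 / 6 : ℝ) * hΔd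

lemma sum_le_bound_mul (hT0 : T 0 = 1)
    (hTrec : ∀ k : ℕ, T (k+1) = (1 + 2 * T k + √(1 + 4 * T k)) / 2) (k : ℕ) :
    ∑ i ∈ range (k + 1), T i ≤ sumRatioBound k * T k := by
  induction k with
  | zero =>
    simp only [zero_add, range_one, sum_singleton, hT0, sumRatioBound, CharP.cast_eq_zero,
      zero_div, mul_one, le_add_iff_nonneg_left]
    positivity
  | succ k ih =>
    set d := √(T (k + 1))
    have hsq : d ^ 2 = T (k + 1) := sq_sqrt (pos hT0 hTrec (k + 1)).le
    have hT : T k = d ^ 2 - d := by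
      linarith [succ_eq_add_sqrt_succ hTrec (pos hT0 hTrec k).le]
    have key := mul_le_mul_of_nonneg_left (bound_sub_mul_sqrt_succ_le hT0 hTrec k)
      (sqrt_nonneg (T (k + 1)))
    rw [sum_range_succ, ← hsq]
    rw [hT] at ih
    linear_combination ih + key

end SqrtRec

theorem stmt_13 (T : ℕ → ℝ) (hT0 : T 0 = 1)
    (hTrec : ∀ k : ℕ, T (k+1) = (1 + 2 * T k + Real.sqrt (1 + 4 * T k)) / 2) :
    ∀ k : ℕ,
      (∑ i ∈ Finset.range (k+1), T i) / T k ≤ (k : ℝ) / 3 + Real.log ((k : ℝ) + 2) / 6 + 1 := by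
  intro k
  rw [div_le_iff₀ (SqrtRec.pos hT0 hTrec k)]
  exact SqrtRec.sum_le_bound_mul hT0 hTrec k
end

section
/- Define the real sequence t by t_0 = 1 and t_{k+1} = (1 + sqrt(1 + 4 t_k²))/2. Then for every k ≥ 0, t_{k+1} − t_k ≤ 1/2 + 1/(8 t_k), and consequently t_{k+1} ≤ k/2 + 3/2 + (1/4)·log(k+2). -/
theorem stmt_14 (t : ℕ → ℝ) (ht0 : t 0 = 1)
    (htrec : ∀ k : ℕ, t (k+1) = (1 + Real.sqrt (1 + 4 * (t k) ^ 2)) / 2) :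
    ∀ k : ℕ,
      t (k+1) - t k ≤ 1/2 + 1 / (8 * t k) ∧
      t (k+1) ≤ (k : ℝ) / 2 + 3/2 + (1/4) * Real.log ((k : ℝ) + 2) := by
  -- lower bound : t k ≥ k/2 + 1
  have hlow : ∀ k : ℕ, (k : ℝ) / 2 + 1 ≤ t k := by
    intro k
    induction k with
    | zero => simp [ht0]
    | succ n ih =>
      have hpos : (0:ℝ) < t n := by
        have : (0:ℝ) ≤ (n:ℝ)/2 := by positivity
        linarith
      have hs : 2 * t n ≤ Real.sqrt (1 + 4 * (t n) ^ 2) := by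
        have h1 : Real.sqrt ((2 * t n)^2) ≤ Real.sqrt (1 + 4 * (t n)^2) := by
          apply Real.sqrt_le_sqrt; nlinarith
        rwa [Real.sqrt_sq (by linarith)] at h1
      rw [htrec n]
      push_cast
      linarith
  -- part 1
  have hpart1 : ∀ k : ℕ, t (k+1) - t k ≤ 1/2 + 1 / (8 * t k) := by
    intro k
    have hpos : (0:ℝ) < t k := by
      have := hlow k
      have : (0:ℝ) ≤ (k:ℝ)/2 := by positivity
      linarith [hlow k]
    have hs : Real.sqrt (1 + 4 * (t k) ^ 2) ≤ 2 * t k + 1 / (4 * t k) := by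
      have hnn : (0:ℝ) ≤ 2 * t k + 1 / (4 * t k) := by positivity
      rw [show 2 * t k + 1 / (4 * t k) = Real.sqrt ((2 * t k + 1 / (4 * t k))^2) from
        (Real.sqrt_sq hnn).symm]
      apply Real.sqrt_le_sqrt
      have h : (2 * t k + 1 / (4 * t k))^2 = 1 + 4 * (t k)^2 + 1/(16 * (t k)^2) := by
        field_simp; ring
      rw [h]
      have : (0:ℝ) ≤ 1/(16 * (t k)^2) := by positivity
      linarith
    rw [htrec k]
    have : 1 / (8 * t k) = (1 / (4 * t k)) / 2 := by ring
    linarith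
  intro k
  refine ⟨hpart1 k, ?_⟩
  induction k with
  | zero =>
    rw [htrec 0, ht0]
    have h5 : Real.sqrt (1 + 4 * (1:ℝ)^2) ≤ 2 + (1/2) * Real.log 2 := by
      have hl2 : (0.6931471803 : ℝ) < Real.log 2 := Real.log_two_gt_d9
      have hnn : (0:ℝ) ≤ 2 + (1/2) * Real.log 2 := by linarith
      rw [show (2 + (1/2) * Real.log 2 : ℝ) = Real.sqrt ((2 + (1/2) * Real.log 2)^2) from
        (Real.sqrt_sq hnn).symm]
      apply Real.sqrt_le_sqrt
      nlinarith [Real.log_two_lt_d9]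
    push_cast
    linarith
  | succ n ih =>
    have ih' := ih
    have h1 := hpart1 (n+1)
    have hl := hlow (n+1)
    have hposn : (0:ℝ) < t (n+1) := by
      have : (0:ℝ) ≤ ((n+1:ℕ):ℝ)/2 := by positivity
      linarith
    -- 1/(8 t(n+1)) ≤ 1/(4(n+3))
    have hden : (4:ℝ) * ((n:ℝ) + 3) ≤ 8 * t (n+1) := by
      push_cast at hl ⊢
      linarith
    have hfrac : 1 / (8 * t (n+1)) ≤ 1 / (4 * ((n:ℝ) + 3)) := by
      apply one_div_le_one_div_of_le
      · positivity
      · exact hden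
    -- log inequality: log(n+2) + 1/(n+3) ≤ log(n+3)
    have hlogineq : Real.log ((n:ℝ) + 2) + 1 / ((n:ℝ) + 3) ≤ Real.log ((n:ℝ) + 3) := by
      have hx : (0:ℝ) < ((n:ℝ) + 2) / ((n:ℝ) + 3) := by positivity
      have h2 : (0:ℝ) < (n:ℝ) + 2 := by positivity
      have h3 : (0:ℝ) < (n:ℝ) + 3 := by positivity
      have := Real.log_le_sub_one_of_pos hx
      rw [Real.log_div (ne_of_gt h2) (ne_of_gt h3)] at this
      have heq : ((n:ℝ) + 2) / ((n:ℝ) + 3) - 1 = -(1 / ((n:ℝ) + 3)) := by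
        field_simp
        ring
      rw [heq] at this
      linarith
    push_cast
    push_cast at ih'
    have hq : 1 / (4 * ((n:ℝ) + 3)) = (1/4) * (1 / ((n:ℝ) + 3)) := by
      field_simp
    have hrw : ((n:ℝ) + 1 + 2) = (n:ℝ) + 3 := by ring
    rw [hrw]
    linarith [hfrac, hlogineq, h1, ih']
end

section
/- Define T by T_0 = 1 and T_{k+1} = (1 + 2T_k + sqrt(1 + 4T_k))/2. Then for every k ≥ 0, sqrt(T_k) ≥ (k+2)/2, i.e., T_k ≥ (k+2)²/4. -/
theorem stmt_15 (T : ℕ → ℝ) (hT0 : T 0 = 1)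
    (hTrec : ∀ k : ℕ, T (k+1) = (1 + 2 * T k + Real.sqrt (1 + 4 * T k)) / 2) :
    ∀ k : ℕ, Real.sqrt (T k) ≥ ((k : ℝ) + 2) / 2 ∧ T k ≥ ((k : ℝ) + 2) ^ 2 / 4 := by
  have key : ∀ k : ℕ, T k ≥ ((k : ℝ) + 2) ^ 2 / 4 := by
    intro k
    induction k with
    | zero => simp [hT0]; norm_num
    | succ n ih =>
      have ha : (0:ℝ) ≤ (n:ℝ) + 2 := by positivity
      have h1 : (1 : ℝ) + 4 * T n ≥ ((n:ℝ) + 2) ^ 2 := by nlinarith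
      have h2 : Real.sqrt (1 + 4 * T n) ≥ (n:ℝ) + 2 := by
        exact (Real.le_sqrt ha (by nlinarith)).mpr h1
      rw [hTrec n]
      push_cast
      nlinarith
  intro k
  refine ⟨?_, key k⟩
  have ha : (0:ℝ) ≤ ((k:ℝ) + 2) / 2 := by positivity
  exact (Real.le_sqrt ha (by nlinarith [key k, sq_nonneg ((k:ℝ)+2)])).mpr (by nlinarith [key k])
end
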